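/- Let p be a prime, K a field with CharP K p, n : ℕ, and μ ν : Matrix (Fin n) (Fin n) K with IsUnit (det μ) and IsUnit (det ν). Then ξ(μ * ν) = ξ(μ) * ξ(ν), where ξ is defined as in the context (i.e., ξ, viewed as a function on invertible matrices, is multiplicative). -/

import Mathlib

/-!
Over a finite field `F` with `q` elements, expand `∏ₖ (x ᵥ* μ)ₖ ^ (q - 1)` by the multinomial
theorem and sum over all `x : Fin n → F`. Since `∑ t, t ^ e` is `0` for `e < q - 1` and `-1` for
`e = q - 1`, only the monomials in which every `xₗ` occurs with exponent exactly `q - 1` survive,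
and the sum is `(-1) ^ n * ξ(μ)`. Summed directly, the same expression is `(-1) ^ n * det μ ^ (q - 1)`:
for invertible `μ` the map `x ↦ x ᵥ* μ` permutes `F ^ n`, and for singular `μ` each of its fibres is
a coset of a nonzero subspace, whose size `q ^ d` vanishes in `F`.

So `ξ = det ^ (p - 1)` on all matrices over `ZMod p`. Both sides are polynomials in the entries of
degree `< p` in each entry, so this is an identity of polynomials over `ZMod p`, which then holds
in every commutative ring of characteristic `p`; multiplicativity of `ξ` is that of `det`.
-/

open Finset

/-- The operator `ξ` from the paper: the sum over all matrices of natural numbers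
`a : Fin n → Fin n → ℕ` whose every row sum and every column sum equals `p - 1`
(all such `a` have entries `< p`, so the index set below captures exactly these) of
`(∏ k, multinomial (a · k)) * ∏ k, ∏ l, (μ l k) ^ (a l k)`. -/
noncomputable def xi (p n : ℕ) {R : Type*} [CommRing R] (μ : Matrix (Fin n) (Fin n) R) : R :=
  ∑ a ∈ Finset.filter
      (fun a : Fin n → Fin n → ℕ =>
        (∀ k, ∑ l, a k l = p - 1) ∧ (∀ l, ∑ k, a k l = p - 1))
      (Fintype.piFinset fun _ => Fintype.piFinset fun _ => Finset.range p),
    ((∏ k, Nat.multinomial Finset.univ (fun l => a l k) : ℕ) : R) *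
      ∏ k, ∏ l, (μ l k) ^ (a l k)

open Matrix MvPolynomial

namespace FiniteField

variable {F : Type*} [Field F] [Fintype F]

theorem card_sub_one_ne_zero : Fintype.card F - 1 ≠ 0 :=
  (Nat.sub_pos_of_lt Fintype.one_lt_card).ne'

theorem sum_pow_card_sub_one : ∑ t : F, t ^ (Fintype.card F - 1) = -1 := by
  classical
  rw [← add_sum_erase univ _ (mem_univ 0), zero_pow card_sub_one_ne_zero, zero_add,
    sum_congr rfl fun t ht => pow_card_sub_one_eq_one t (ne_of_mem_erase ht), sum_const,
    card_erase_of_mem (mem_univ 0), card_univ, nsmul_one, Nat.cast_sub Fintype.card_pos,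
    cast_card_eq_zero, Nat.cast_one, zero_sub]

theorem prod_sum_pow_eq_ite {ι : Type*} [Fintype ι] (e : ι → ℕ)
    (he : ∑ i, e i = Fintype.card ι * (Fintype.card F - 1)) :
    ∏ i, ∑ t : F, t ^ e i =
      if ∀ i, e i = Fintype.card F - 1 then (-1) ^ Fintype.card ι else 0 := by
  split_ifs with h
  · simp [h, sum_pow_card_sub_one]
  · obtain ⟨i, hi⟩ : ∃ i, e i < Fintype.card F - 1 := by
      by_contra! hge
      refine h fun i => ((sum_eq_sum_iff_of_le fun i _ => hge i).mp ?_ i (mem_univ i)).symm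
      simp [he]
    exact prod_eq_zero (mem_univ i) (sum_pow_lt_card_sub_one F _ hi)

theorem sum_comp_eq_zero_of_not_injective {V W : Type*} [AddCommGroup V] [Module F V] [Fintype V]
    [AddCommGroup W] [Module F W] (f : V →ₗ[F] W) (hf : ¬ Function.Injective f) (h : W → F) :
    ∑ x, h (f x) = 0 := by
  classical
  have hker : (#{x | f x = 0} : F) = 0 := by
    have hpos : 0 < Module.finrank F (LinearMap.ker f) :=
      Module.finrank_pos_iff.mpr (Submodule.nontrivial_iff_ne_bot.mpr
        (mt LinearMap.ker_eq_bot.mp hf))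
    rw [← Fintype.card_subtype,
      Fintype.card_congr (Equiv.subtypeEquivRight fun x => LinearMap.mem_ker.symm),
      Module.card_eq_pow_finrank (K := F), Nat.cast_pow, cast_card_eq_zero, zero_pow hpos.ne']
  rw [sum_comp]
  refine sum_eq_zero fun y hy => ?_
  obtain ⟨x, -, rfl⟩ := mem_image.mp hy
  rw [AddMonoidHom.card_fiber_eq_of_mem_range f ⟨x, rfl⟩ ⟨0, map_zero f⟩, nsmul_eq_mul, hker,
    zero_mul]

theorem sum_prod_vecMul_pow_card_sub_one_eq_det_pow {m : Type*} [Fintype m] [DecidableEq m]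
    (μ : Matrix m m F) :
    ∑ x : m → F, ∏ k, (x ᵥ* μ) k ^ (Fintype.card F - 1) =
      (-1) ^ Fintype.card m * μ.det ^ (Fintype.card F - 1) := by
  by_cases hdet : μ.det = 0
  · have hinj : ¬ Function.Injective μ.vecMulLinear := by
      obtain ⟨v, hv, hv0⟩ := exists_vecMul_eq_zero_iff.mpr hdet
      exact fun h => hv (h (by simp [hv0]))
    rw [hdet, zero_pow card_sub_one_ne_zero, mul_zero]
    exact sum_comp_eq_zero_of_not_injective μ.vecMulLinear hinj fun y => ∏ k, y k ^ _
  · have hunit : IsUnit μ := (isUnit_iff_isUnit_det μ).mpr (isUnit_iff_ne_zero.mpr hdet)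
    have hbij : Function.Bijective μ.vecMul :=
      ⟨vecMul_injective_iff_isUnit.mpr hunit, vecMul_surjective_iff_isUnit.mpr hunit⟩
    rw [hbij.sum_comp fun y => ∏ k, y k ^ (Fintype.card F - 1),
      ← Fintype.prod_sum fun (_ : m) (t : F) => t ^ (Fintype.card F - 1)]
    simp [sum_pow_card_sub_one, pow_card_sub_one_eq_one _ hdet]

end FiniteField

theorem Matrix.prod_vecMul_pow_eq_sum_piAntidiag {R m : Type*} [CommSemiring R] [Fintype m]
    [DecidableEq m] (μ : Matrix m m R) (x : m → R) (d : ℕ) :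
    ∏ k, (x ᵥ* μ) k ^ d = ∑ b ∈ Fintype.piFinset fun _ : m => piAntidiag univ d,
      (∏ k, Nat.multinomial univ (b k) : ℕ) * (∏ k, ∏ l, μ l k ^ b k l) *
        ∏ l, x l ^ ∑ k, b k l := by
  simp_rw [vecMul, dotProduct, sum_pow_eq_sum_piAntidiag]
  rw [prod_univ_sum]
  refine sum_congr rfl fun b _ => ?_
  simp_rw [mul_pow, prod_mul_distrib, Nat.cast_prod, ← prod_pow_eq_pow_sum]
  rw [prod_comm (f := fun k l => x l ^ b k l)]
  ring

theorem xi_eq_sum_piAntidiag {p n : ℕ} (hp : 0 < p) {R : Type*} [CommRing R]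
    (μ : Matrix (Fin n) (Fin n) R) :
    xi p n μ = ∑ b ∈ Fintype.piFinset (fun _ : Fin n => piAntidiag univ (p - 1)) with
        ∀ l, ∑ k, b k l = p - 1,
      (∏ k, Nat.multinomial univ (b k) : ℕ) * ∏ k, ∏ l, μ l k ^ b k l := by
  refine sum_nbij' (fun a k l => a l k) (fun b l k => b k l) ?_ ?_ (fun _ _ => rfl)
    (fun _ _ => rfl) (fun _ _ => rfl)
  · intro a ha
    simp only [mem_filter, Fintype.mem_piFinset, mem_piAntidiag] at ha ⊢
    exact ⟨fun k => ⟨ha.2.2 k, fun l _ => mem_univ l⟩, ha.2.1⟩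
  · intro b hb
    simp only [mem_filter, Fintype.mem_piFinset, mem_piAntidiag, mem_range] at hb ⊢
    refine ⟨fun l k => ?_, hb.2, fun k => (hb.1 k).1⟩
    have := (hb.1 k).1 ▸ single_le_sum (fun i _ => Nat.zero_le (b k i)) (mem_univ l)
    omega

theorem RingHom.map_xi {R S : Type*} [CommRing R] [CommRing S] (f : R →+* S) (p n : ℕ)
    (μ : Matrix (Fin n) (Fin n) R) : f (xi p n μ) = xi p n (μ.map f) := by
  simp only [xi, map_sum, map_mul, map_natCast, map_prod, map_pow, Matrix.map_apply]

namespace FiniteField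

variable {F : Type*} [Field F] [Fintype F]

theorem sum_prod_vecMul_pow_card_sub_one_eq_xi {n : ℕ} (μ : Matrix (Fin n) (Fin n) F) :
    ∑ x : Fin n → F, ∏ k, (x ᵥ* μ) k ^ (Fintype.card F - 1) =
      (-1) ^ n * xi (Fintype.card F) n μ := by
  set q := Fintype.card F
  calc ∑ x : Fin n → F, ∏ k, (x ᵥ* μ) k ^ (q - 1)
      = ∑ b ∈ Fintype.piFinset fun _ : Fin n => piAntidiag univ (q - 1),
          (∏ k, Nat.multinomial univ (b k) : ℕ) * (∏ k, ∏ l, μ l k ^ b k l) *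
            ∏ l, ∑ t : F, t ^ ∑ k, b k l := by
        simp_rw [prod_vecMul_pow_eq_sum_piAntidiag, Fintype.prod_sum]
        rw [sum_comm]
        simp_rw [mul_sum]
    _ = ∑ b ∈ Fintype.piFinset fun _ : Fin n => piAntidiag univ (q - 1),
          if ∀ l, ∑ k, b k l = q - 1 then
            (-1) ^ n * ((∏ k, Nat.multinomial univ (b k) : ℕ) * ∏ k, ∏ l, μ l k ^ b k l)
          else 0 := by
        refine sum_congr rfl fun b hb => ?_
        have hsum : ∑ l, ∑ k, b k l = Fintype.card (Fin n) * (q - 1) := by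
          simp only [Fintype.mem_piFinset, mem_piAntidiag] at hb
          rw [sum_comm, sum_congr rfl fun k _ => (hb k).1]
          simp
        rw [prod_sum_pow_eq_ite _ hsum, Fintype.card_fin]
        split_ifs <;> ring
    _ = (-1) ^ n * xi q n μ := by
        rw [← sum_filter, xi_eq_sum_piAntidiag Fintype.card_pos, mul_sum]

theorem xi_card_eq_det_pow {n : ℕ} (μ : Matrix (Fin n) (Fin n) F) :
    xi (Fintype.card F) n μ = μ.det ^ (Fintype.card F - 1) :=
  mul_left_cancel₀ (pow_ne_zero n (neg_ne_zero.mpr one_ne_zero)) <| by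
    rw [← sum_prod_vecMul_pow_card_sub_one_eq_xi, sum_prod_vecMul_pow_card_sub_one_eq_det_pow,
      Fintype.card_fin]

end FiniteField

namespace MvPolynomial

theorem mem_restrictDegree_iff_degreeOf_le {σ R : Type*} [CommSemiring R] (P : MvPolynomial σ R)
    (d : ℕ) : P ∈ restrictDegree σ R d ↔ ∀ i, degreeOf i P ≤ d := by
  classical
  simp only [mem_restrictDegree_iff_sup, degreeOf_def]

theorem degreeOf_prod_prod_mvPolynomialX_pow_le {R m n : Type*} [CommSemiring R] [Nontrivial R]
    [Fintype m] [Fintype n] (a : m → n → ℕ) (i : m × n) :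
    degreeOf i (∏ k, ∏ l, mvPolynomialX m n R l k ^ a l k) ≤ a i.1 i.2 := by
  classical
  calc degreeOf i (∏ k, ∏ l, mvPolynomialX m n R l k ^ a l k)
      ≤ ∑ k, ∑ l, a l k * degreeOf i (X (l, k) : MvPolynomial (m × n) R) :=
        (degreeOf_prod_le _ _ _).trans <| sum_le_sum fun k _ =>
          (degreeOf_prod_le _ _ _).trans <| sum_le_sum fun l _ => degreeOf_pow_le _ _ _
    _ = a i.1 i.2 := by
        simp [degreeOf_X, Prod.ext_iff, eq_comm, ite_and]

theorem degreeOf_det_mvPolynomialX_le {R m : Type*} [CommRing R] [Nontrivial R]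
    [Fintype m] [DecidableEq m] (i : m × m) :
    degreeOf i (mvPolynomialX m m R).det ≤ 1 := by
  rw [det_apply']
  refine (degreeOf_sum_le _ _ _).trans (Finset.sup_le fun σ _ => ?_)
  rw [← map_intCast (C : R →+* MvPolynomial (m × m) R)]
  refine (degreeOf_C_mul_le _ _ _).trans ?_
  calc degreeOf i (∏ k, mvPolynomialX m m R (σ k) k)
      ≤ ∑ k, degreeOf i (X (σ k, k) : MvPolynomial (m × m) R) := degreeOf_prod_le _ _ _
    _ ≤ ∑ k, if k = i.2 then 1 else 0 := sum_le_sum fun k _ => by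
        rw [degreeOf_X]
        split_ifs with h h'
        exacts [le_rfl, absurd (congrArg Prod.snd h).symm h', Nat.zero_le _, Nat.zero_le _]
    _ = 1 := by simp

theorem degreeOf_xi_mvPolynomialX_le {R : Type*} [CommRing R] [Nontrivial R] (p n : ℕ)
    (i : Fin n × Fin n) : degreeOf i (xi p n (mvPolynomialX (Fin n) (Fin n) R)) ≤ p - 1 := by
  rw [xi]
  refine (degreeOf_sum_le _ _ _).trans (Finset.sup_le fun a ha => ?_)
  rw [← map_natCast (C : R →+* MvPolynomial (Fin n × Fin n) R)]
  refine (degreeOf_C_mul_le _ _ _).trans ((degreeOf_prod_prod_mvPolynomialX_pow_le a i).trans ?_)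
  simp only [mem_filter, Fintype.mem_piFinset, mem_range] at ha
  have := ha.1 i.1 i.2
  omega

end MvPolynomial

theorem FiniteField.xi_card_mvPolynomialX_eq_det_pow (F : Type) [Field F] [Fintype F] (n : ℕ) :
    xi (Fintype.card F) n (mvPolynomialX (Fin n) (Fin n) F) =
      (mvPolynomialX (Fin n) (Fin n) F).det ^ (Fintype.card F - 1) := by
  rw [← sub_eq_zero]
  refine eq_zero_of_eval_eq_zero _ _ _ (fun v => ?_) ?_
  · have hv : (mvPolynomialX (Fin n) (Fin n) F).map (eval v) = Matrix.of fun i j => v (i, j) := by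
      ext i j; simp [mvPolynomialX_apply]
    rw [map_sub, RingHom.map_xi, hv, map_pow, eval_det_mvPolynomialX, xi_card_eq_det_pow,
      sub_self]
  · refine sub_mem ((mem_restrictDegree_iff_degreeOf_le _ _).mpr fun i =>
      degreeOf_xi_mvPolynomialX_le _ _ i) ((mem_restrictDegree_iff_degreeOf_le _ _).mpr fun i => ?_)
    calc degreeOf i ((mvPolynomialX (Fin n) (Fin n) F).det ^ (Fintype.card F - 1))
        ≤ (Fintype.card F - 1) * 1 :=
          (degreeOf_pow_le _ _ _).trans (Nat.mul_le_mul_left _ (degreeOf_det_mvPolynomialX_le i))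
      _ = Fintype.card F - 1 := mul_one _

theorem xi_eq_det_pow {p : ℕ} (hp : p.Prime) {R : Type*} [CommRing R] [CharP R p] {n : ℕ}
    (μ : Matrix (Fin n) (Fin n) R) : xi p n μ = μ.det ^ (p - 1) := by
  have : Fact p.Prime := ⟨hp⟩
  have h := congrArg (eval₂Hom (ZMod.castHom dvd_rfl R) fun q => μ q.1 q.2)
    (FiniteField.xi_card_mvPolynomialX_eq_det_pow (ZMod p) n)
  rwa [ZMod.card, RingHom.map_xi, map_pow, RingHom.map_det, RingHom.mapMatrix_apply, coe_eval₂Hom,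
    mvPolynomialX_map_eval₂] at h

theorem xi_mul_general (p : ℕ) (hp : p.Prime) (K : Type*) [Field K] [CharP K p] (n : ℕ)
    (μ ν : Matrix (Fin n) (Fin n) K) :
    xi p n (μ * ν) = xi p n μ * xi p n ν := by
  rw [xi_eq_det_pow hp, xi_eq_det_pow hp, xi_eq_det_pow hp, det_mul, mul_pow]

/-- `ξ`, viewed as a function on invertible matrices over a field of characteristic `p`,
is multiplicative. -/
theorem xi_mul (p : ℕ) (hp : p.Prime) (K : Type*) [Field K] [CharP K p] (n : ℕ)
    (μ ν : Matrix (Fin n) (Fin n) K) (hμ : IsUnit μ.det) (hν : IsUnit ν.det) :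
    xi p n (μ * ν) = xi p n μ * xi p n ν :=
  xi_mul_general p hp K n μ ν
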